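/- arXiv:2402.13127 — 2 statements merged into one kernel-verified Lean document; each statement's English description precedes it below -/
import Mathlib

section
/- For every real number σ > 1, the negative of the logarithmic derivative of the Riemann zeta function satisfies -ζ'(σ)/ζ(σ) < 1/(σ - 1). -/
open Complex Finset LSeries

namespace NegLogDerivZetaAux

/-- Bernoulli-type step bound: `(σ-1) n^{-σ} ≤ (n-1)^{1-σ} - n^{1-σ}`. -/
private lemma rpow_step {σ : ℝ} (hσ : 1 < σ) {n : ℕ} (hn : 2 ≤ n) :
    (σ - 1) * (n : ℝ) ^ (-σ) ≤ ((n - 1 : ℕ) : ℝ) ^ (1 - σ) - (n : ℝ) ^ (1 - σ) := by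
  set m : ℝ := ((n - 1 : ℕ) : ℝ) with hm
  have hm1 : (1 : ℝ) ≤ m := by
    rw [hm]
    exact_mod_cast (by omega : 1 ≤ n - 1)
  have hm0 : (0 : ℝ) < m := by linarith
  have hnm : (n : ℝ) = m + 1 := by
    rw [hm, Nat.cast_sub (by omega : 1 ≤ n)]; ring
  have hn0 : (0 : ℝ) < (n : ℝ) := by positivity
  have hmσ : (0 : ℝ) < m ^ σ := Real.rpow_pos_of_pos hm0 σ
  have hnσ : (0 : ℝ) < (n : ℝ) ^ σ := Real.rpow_pos_of_pos hn0 σ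
  -- Bernoulli
  have hb : 1 + σ * (1 / m) ≤ (1 + 1 / m) ^ σ :=
    one_add_mul_self_le_rpow_one_add
      (by have : (0:ℝ) < 1 / m := by positivity
          linarith) hσ.le
  have h1m : 1 + 1 / m = (n : ℝ) / m := by
    rw [hnm]; field_simp
  rw [h1m, Real.div_rpow (Nat.cast_nonneg n) hm0.le] at hb
  have hb2 : (1 + σ * (1 / m)) * m ^ σ ≤ (n : ℝ) ^ σ := (le_div_iff₀ hmσ).mp hb
  have key : (m + σ) * m ^ σ ≤ m * (n : ℝ) ^ σ := by
    have hb3 := mul_le_mul_of_nonneg_left hb2 hm0.le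
    have e : m * ((1 + σ * (1 / m)) * m ^ σ) = (m + σ) * m ^ σ := by
      field_simp
    linarith [e ▸ hb3]
  have h6 : (m + σ) / (n : ℝ) ^ σ ≤ m / m ^ σ :=
    (div_le_div_iff₀ hnσ hmσ).mpr (by linarith)
  have hrw1 : ((n - 1 : ℕ) : ℝ) ^ (1 - σ) = m / m ^ σ := by
    rw [← hm, Real.rpow_sub hm0, Real.rpow_one]
  have hrw2 : (n : ℝ) ^ (1 - σ) = (n : ℝ) / (n : ℝ) ^ σ := by
    rw [Real.rpow_sub hn0, Real.rpow_one]
  have hrw3 : (n : ℝ) ^ (-σ) = 1 / (n : ℝ) ^ σ := by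
    rw [Real.rpow_neg hn0.le, one_div]
  rw [hrw1, hrw2, hrw3]
  have e3 : (σ - 1) * (1 / (n : ℝ) ^ σ) + (n : ℝ) / (n : ℝ) ^ σ = (m + σ) / (n : ℝ) ^ σ := by
    rw [hnm]; field_simp; ring
  linarith

/-- Tail bound: `∑_{k ≤ n < N} n^{-σ} ≤ (k-1)^{1-σ}/(σ-1)`. -/
private lemma tail_bound {σ : ℝ} (hσ : 1 < σ) {k : ℕ} (hk : 2 ≤ k) (N : ℕ) :
    ∑ n ∈ Ico k N, (n : ℝ) ^ (-σ) ≤ ((k - 1 : ℕ) : ℝ) ^ (1 - σ) / (σ - 1) := by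
  have hσ0 : (0 : ℝ) < σ - 1 := by linarith
  rw [le_div_iff₀ hσ0]
  have step1 : (∑ n ∈ Ico k N, (n : ℝ) ^ (-σ)) * (σ - 1)
      = ∑ n ∈ Ico k N, (σ - 1) * (n : ℝ) ^ (-σ) := by
    rw [Finset.sum_mul]; exact Finset.sum_congr rfl fun n _ => mul_comm _ _
  rw [step1]
  have step2 : ∑ n ∈ Ico k N, (σ - 1) * (n : ℝ) ^ (-σ)
      ≤ ∑ n ∈ Ico k N, (((n - 1 : ℕ) : ℝ) ^ (1 - σ) - ((n : ℕ) : ℝ) ^ (1 - σ)) :=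
    Finset.sum_le_sum fun n hn => rpow_step hσ (hk.trans (Finset.mem_Ico.mp hn).1)
  refine step2.trans ?_
  set F : ℕ → ℝ := fun j => ((j : ℕ) : ℝ) ^ (1 - σ) with hF
  have hF0 : ∀ j, 0 ≤ F j := fun j => Real.rpow_nonneg (Nat.cast_nonneg j) _
  rcases le_or_gt N k with h | h
  · rw [Finset.Ico_eq_empty (by omega)]
    simpa using hF0 (k - 1)
  · rw [Finset.sum_Ico_eq_sum_range]
    have e : ∀ i, F (k + i - 1) - F (k + i) = F (k - 1 + i) - F (k - 1 + (i + 1)) := by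
      intro i; congr 2 <;> omega
    calc ∑ i ∈ range (N - k), (F (k + i - 1) - F (k + i))
        = ∑ i ∈ range (N - k), (F (k - 1 + i) - F (k - 1 + (i + 1))) :=
          Finset.sum_congr rfl fun i _ => e i
      _ = F (k - 1 + 0) - F (k - 1 + (N - k)) := Finset.sum_range_sub' (fun i => F (k - 1 + i)) _
      _ ≤ F (k - 1) := by
          simp only [Nat.add_zero]
          linarith [hF0 (k - 1 + (N - k))]

private lemma log_telescope (n : ℕ) :
    Real.log n = ∑ k ∈ Ico 2 (n + 1), (Real.log k - Real.log (k - 1 : ℕ)) := by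
  induction n with
  | zero => simp
  | succ n ih =>
    rcases Nat.lt_or_ge n 1 with h | h
    · interval_cases n; simp
    · rw [Finset.sum_Ico_succ_top (by omega : 2 ≤ n + 1), ← ih]
      have : (n + 1 - 1 : ℕ) = n := by omega
      rw [this]; ring

private lemma log_diff_le {k : ℕ} (hk : 2 ≤ k) :
    Real.log k - Real.log (k - 1 : ℕ) ≤ (((k - 1 : ℕ) : ℝ))⁻¹ := by
  have h0 : (0 : ℝ) < ((k - 1 : ℕ) : ℝ) := by
    have : 0 < k - 1 := by omega
    exact_mod_cast this
  have hkm : (k : ℝ) - ((k - 1 : ℕ) : ℝ) = 1 := by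
    rw [Nat.cast_sub (by omega : 1 ≤ k)]; ring
  have hk0 : (0 : ℝ) < (k : ℝ) := by positivity
  rw [← Real.log_div hk0.ne' h0.ne']
  calc Real.log ((k : ℝ) / ((k - 1 : ℕ) : ℝ)) ≤ (k : ℝ) / ((k - 1 : ℕ) : ℝ) - 1 :=
        Real.log_le_sub_one_of_pos (by positivity)
    _ = (((k - 1 : ℕ) : ℝ))⁻¹ := by
        rw [div_sub_one h0.ne', hkm, one_div]

private lemma log_nat_nonneg (n : ℕ) : 0 ≤ Real.log n := by
  rcases Nat.eq_zero_or_pos n with rfl | h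
  · simp
  · exact Real.log_natCast_nonneg n

/-- The key estimate: `∑ log n · n^{-σ} ≤ (log 2 + Z - 1)/(σ-1)` where `Z = ∑ n^{-σ}`. -/
private lemma D_le {σ : ℝ} (hσ : 1 < σ) :
    ∑' n : ℕ, Real.log n * (n : ℝ) ^ (-σ)
      ≤ (Real.log 2 + (∑' n : ℕ, (n : ℝ) ^ (-σ)) - 1) / (σ - 1) := by
  have hσ0 : (0 : ℝ) < σ - 1 := by linarith
  set Z : ℝ := ∑' n : ℕ, (n : ℝ) ^ (-σ) with hZ
  have hsum : Summable (fun n : ℕ => (n : ℝ) ^ (-σ)) :=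
    Real.summable_nat_rpow.mpr (by linarith)
  have hZ1 : (1 : ℝ) ≤ Z := by
    have h1 : ((1 : ℕ) : ℝ) ^ (-σ) ≤ Z :=
      Summable.le_tsum hsum 1 fun i _ => Real.rpow_nonneg (Nat.cast_nonneg i) _
    simpa using h1
  have hlog2 : (0 : ℝ) ≤ Real.log 2 := Real.log_nonneg (by norm_num)
  refine Real.tsum_le_of_sum_range_le
    (fun n => mul_nonneg (log_nat_nonneg n) (Real.rpow_nonneg (Nat.cast_nonneg n) _))
    fun N => ?_
  have hZm1 : ∀ M : ℕ, ∑ j ∈ Ico 2 M, ((j : ℕ) : ℝ) ^ (-σ) ≤ Z - 1 := by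
    intro M
    have hins : (1 : ℝ) + ∑ j ∈ Ico 2 M, ((j : ℕ) : ℝ) ^ (-σ)
        = ∑ j ∈ insert 1 (Ico 2 M), ((j : ℕ) : ℝ) ^ (-σ) := by
      rw [Finset.sum_insert (by simp)]
      simp
    have hle : ∑ j ∈ insert 1 (Ico 2 M), ((j : ℕ) : ℝ) ^ (-σ) ≤ Z :=
      Summable.sum_le_tsum _ (fun i _ => Real.rpow_nonneg (Nat.cast_nonneg i) _) hsum
    linarith
  refine le_trans ?_ (le_of_eq (by ring : (Real.log 2 + (Z - 1)) / (σ - 1)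
      = (Real.log 2 + Z - 1) / (σ - 1)))
  have main : ∑ n ∈ range N, Real.log n * (n : ℝ) ^ (-σ)
      = ∑ k ∈ Ico 2 N, (Real.log k - Real.log (k - 1 : ℕ)) * ∑ n ∈ Ico k N, (n : ℝ) ^ (-σ) := by
    calc ∑ n ∈ range N, Real.log n * (n : ℝ) ^ (-σ)
        = ∑ n ∈ range N, ∑ k ∈ Ico 2 (n + 1),
            (Real.log k - Real.log (k - 1 : ℕ)) * (n : ℝ) ^ (-σ) := by
          refine Finset.sum_congr rfl fun n _ => ?_
          rw [← Finset.sum_mul, ← log_telescope]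
      _ = ∑ k ∈ Ico 2 N, ∑ n ∈ Ico k N,
            (Real.log k - Real.log (k - 1 : ℕ)) * (n : ℝ) ^ (-σ) := by
          refine Finset.sum_comm' ?_
          intro n k
          simp only [Finset.mem_range, Finset.mem_Ico]
          omega
      _ = ∑ k ∈ Ico 2 N, (Real.log k - Real.log (k - 1 : ℕ)) * ∑ n ∈ Ico k N, (n : ℝ) ^ (-σ) :=
          Finset.sum_congr rfl fun k _ => (Finset.mul_sum _ _ _).symm
  rw [main]
  rcases le_or_gt N 2 with hN | hN
  · rw [Finset.Ico_eq_empty (by omega)]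
    simp only [Finset.sum_empty]
    exact div_nonneg (by linarith) (by linarith)
  · rw [Finset.sum_eq_sum_Ico_succ_bot (by omega : 2 < N)]
    -- the k = 2 term
    have h2term : (Real.log ((2 : ℕ) : ℝ) - Real.log (((2 : ℕ) - 1 : ℕ) : ℝ))
        * ∑ n ∈ Ico 2 N, (n : ℝ) ^ (-σ) ≤ Real.log 2 / (σ - 1) := by
      have hc2 : Real.log ((2 : ℕ) : ℝ) - Real.log (((2 : ℕ) - 1 : ℕ) : ℝ) = Real.log 2 := by
        norm_num
      rw [hc2]
      have hT := tail_bound hσ (le_refl 2) N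
      have h1σ : (((2 : ℕ) - 1 : ℕ) : ℝ) ^ (1 - σ) = 1 := by
        norm_num
      rw [h1σ] at hT
      calc Real.log 2 * ∑ n ∈ Ico 2 N, (n : ℝ) ^ (-σ)
          ≤ Real.log 2 * (1 / (σ - 1)) := mul_le_mul_of_nonneg_left hT hlog2
        _ = Real.log 2 / (σ - 1) := by ring
    -- the k ≥ 3 terms
    have h3term : ∑ k ∈ Ico 3 N, (Real.log k - Real.log (k - 1 : ℕ))
        * ∑ n ∈ Ico k N, (n : ℝ) ^ (-σ) ≤ (Z - 1) / (σ - 1) := by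
      have hstep : ∑ k ∈ Ico 3 N, (Real.log k - Real.log (k - 1 : ℕ))
          * ∑ n ∈ Ico k N, (n : ℝ) ^ (-σ)
          ≤ ∑ k ∈ Ico 3 N, ((k - 1 : ℕ) : ℝ) ^ (-σ) / (σ - 1) := by
        refine Finset.sum_le_sum fun k hk => ?_
        have hk2 : 2 ≤ k := by have := (Finset.mem_Ico.mp hk).1; omega
        have hk10 : (0 : ℝ) < ((k - 1 : ℕ) : ℝ) := by
          have : 0 < k - 1 := by omega
          exact_mod_cast this
        have hT0 : 0 ≤ ∑ n ∈ Ico k N, (n : ℝ) ^ (-σ) :=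
          Finset.sum_nonneg fun n _ => Real.rpow_nonneg (Nat.cast_nonneg n) _
        have hT := tail_bound hσ hk2 N
        have hck := log_diff_le hk2
        have hmul : (Real.log k - Real.log (k - 1 : ℕ)) * ∑ n ∈ Ico k N, (n : ℝ) ^ (-σ)
            ≤ (((k - 1 : ℕ) : ℝ))⁻¹ * (((k - 1 : ℕ) : ℝ) ^ (1 - σ) / (σ - 1)) :=
          mul_le_mul hck hT hT0 (by positivity)
        refine hmul.trans (le_of_eq ?_)
        have hsplit : ((k - 1 : ℕ) : ℝ) ^ (1 - σ)
            = ((k - 1 : ℕ) : ℝ) * ((k - 1 : ℕ) : ℝ) ^ (-σ) := by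
          rw [show (1 - σ) = 1 + (-σ) by ring, Real.rpow_add hk10, Real.rpow_one]
        rw [hsplit, ← mul_div_assoc, ← mul_assoc, inv_mul_cancel₀ hk10.ne', one_mul]
      refine hstep.trans ?_
      rw [← Finset.sum_div]
      have hre : ∑ k ∈ Ico 3 N, ((k - 1 : ℕ) : ℝ) ^ (-σ)
          = ∑ j ∈ Ico 2 (N - 1), ((j : ℕ) : ℝ) ^ (-σ) := by
        rw [Finset.sum_Ico_eq_sum_range, Finset.sum_Ico_eq_sum_range]
        have hMM : N - 3 = N - 1 - 2 := by omega
        rw [← hMM]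
        refine Finset.sum_congr rfl fun i _ => ?_
        have h31 : 3 + i - 1 = 2 + i := by omega
        rw [h31]
      rw [hre]
      gcongr
      exact hZm1 (N - 1)
    calc (Real.log ((2 : ℕ) : ℝ) - Real.log (((2 : ℕ) - 1 : ℕ) : ℝ))
          * ∑ n ∈ Ico 2 N, (n : ℝ) ^ (-σ)
        + ∑ k ∈ Ico 3 N, (Real.log k - Real.log (k - 1 : ℕ)) * ∑ n ∈ Ico k N, (n : ℝ) ^ (-σ)
        ≤ Real.log 2 / (σ - 1) + (Z - 1) / (σ - 1) := add_le_add h2term h3term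
      _ = (Real.log 2 + (Z - 1)) / (σ - 1) := by ring

end NegLogDerivZetaAux

/-- For every real σ > 1, -ζ'(σ)/ζ(σ) < 1/(σ-1). -/
theorem neg_logDeriv_riemannZeta_lt (σ : ℝ) (hσ : 1 < σ) :
    (-(deriv riemannZeta (σ : ℂ)) / riemannZeta (σ : ℂ)).re < 1 / (σ - 1) := by
  have hσ' : 1 < (σ : ℂ).re := by simpa using hσ
  have hσ0 : (0 : ℝ) < σ - 1 := by linarith
  set D : ℝ := ∑' n : ℕ, Real.log n * (n : ℝ) ^ (-σ) with hDdef
  set Z : ℝ := ∑' n : ℕ, (n : ℝ) ^ (-σ) with hZdef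
  have hsum : Summable (fun n : ℕ => (n : ℝ) ^ (-σ)) :=
    Real.summable_nat_rpow.mpr (by linarith)
  have hZ1 : (1 : ℝ) ≤ Z := by
    have h1 : ((1 : ℕ) : ℝ) ^ (-σ) ≤ Z :=
      Summable.le_tsum hsum 1 fun i _ => Real.rpow_nonneg (Nat.cast_nonneg i) _
    simpa using h1
  have habs : abscissaOfAbsConv 1 < (σ : ℂ).re := by
    rw [LSeries.abscissaOfAbsConv_one]
    exact_mod_cast hσ'
  have hterm1 : ∀ n : ℕ, LSeries.term 1 (σ : ℂ) n = ((((n : ℝ) ^ (-σ) : ℝ)) : ℂ) := by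
    intro n
    rcases eq_or_ne n 0 with rfl | hn
    · rw [LSeries.term_zero, Nat.cast_zero, Real.zero_rpow (by linarith : -σ ≠ 0),
        Complex.ofReal_zero]
    · rw [LSeries.term_of_ne_zero hn, Pi.one_apply, Real.rpow_neg (Nat.cast_nonneg n),
        Complex.ofReal_inv, Complex.ofReal_cpow (Nat.cast_nonneg n), Complex.ofReal_natCast,
        one_div]
  have hterm2 : ∀ n : ℕ, LSeries.term (LSeries.logMul 1) (σ : ℂ) n
      = (((Real.log n * (n : ℝ) ^ (-σ) : ℝ)) : ℂ) := by
    intro n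
    rcases eq_or_ne n 0 with rfl | hn
    · rw [LSeries.term_zero, Nat.cast_zero, Real.log_zero, zero_mul, Complex.ofReal_zero]
    · rw [LSeries.term_of_ne_zero hn, LSeries.logMul, Pi.one_apply, mul_one,
        Complex.ofReal_mul, Real.rpow_neg (Nat.cast_nonneg n), Complex.ofReal_inv,
        Complex.ofReal_cpow (Nat.cast_nonneg n), Complex.ofReal_natCast,
        Complex.natCast_log]
      rw [div_eq_mul_inv, mul_comm]
  have hzeta : riemannZeta (σ : ℂ) = ((Z : ℝ) : ℂ) := by
    rw [← LSeries_one_eq_riemannZeta hσ', hZdef, Complex.ofReal_tsum]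
    exact tsum_congr fun n => hterm1 n
  have hLd : deriv (LSeries 1) (σ : ℂ) = deriv riemannZeta (σ : ℂ) :=
    Filter.EventuallyEq.deriv_eq <| Filter.eventuallyEq_iff_exists_mem.mpr
      ⟨{z | 1 < z.re}, (isOpen_lt continuous_const continuous_re).mem_nhds hσ',
        fun _ hz => LSeries_one_eq_riemannZeta hz⟩
  have hderiv : deriv riemannZeta (σ : ℂ) = -((D : ℝ) : ℂ) := by
    rw [← hLd, LSeries_deriv habs]
    congr 1
    rw [hDdef, Complex.ofReal_tsum]
    exact tsum_congr fun n => hterm2 n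
  rw [hderiv, hzeta, neg_neg, ← Complex.ofReal_div, Complex.ofReal_re]
  have hD0 : (0 : ℝ) ≤ D :=
    tsum_nonneg fun n => mul_nonneg (NegLogDerivZetaAux.log_nat_nonneg n)
      (Real.rpow_nonneg (Nat.cast_nonneg n) _)
  have hDle := NegLogDerivZetaAux.D_le hσ
  have hDle' : D * (σ - 1) ≤ Real.log 2 + Z - 1 := (le_div_iff₀ hσ0).mp hDle
  have hlog2 : Real.log 2 < 1 := by
    have := Real.log_lt_sub_one_of_pos (by norm_num : (0:ℝ) < 2) (by norm_num)
    linarith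
  rw [div_lt_div_iff₀ (by linarith : (0:ℝ) < Z) hσ0]
  linarith
end

section
/- Let K be a number field, q a nonzero prime ideal of O_K, H the ray class group modulo q, and χ a character of H induced by a character χ* of the class group (i.e., of the ray class group modulo O_K). Then for x ≥ 2, the difference of the partial Euler sums satisfies |Φ_{χ*}(x) − Φ_χ(x)| ≤ (x/(x−1)) · (log N(q))/(N(q) − 1), where Φ_χ(x) = (1/(x−1)) ∫_1^x (∑_{N(a) ≤ t, (a,q)=1} Λ(a) χ([a])/N(a)) dt and Φ_{χ*}(x) is defined with the sum over all a with N(a) ≤ t. -/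
open NumberField MeasureTheory

/-!
The two partial sums differ only in the ideals not coprime to `q`. Since `Λ` lives on prime
powers and a prime power not coprime to the maximal ideal `q` is a power `q ^ k`, at every height
`t` the difference is at most `∑_{k ≥ 1} log N(q) / N(q) ^ k = log N(q) / (N(q) - 1)`. Averaging
over `[1, x]` keeps this bound, and `x / (x - 1) ≥ 1`.
-/

theorem hasSum_div_pow_succ (c : ℝ) {n : ℝ} (hn : 1 < n) :
    HasSum (fun k : ℕ => c / n ^ (k + 1)) (c / (n - 1)) := by
  have hn0 : n ≠ 0 := (zero_lt_one.trans hn).ne'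
  have hn1 : n - 1 ≠ 0 := (sub_pos.2 hn).ne'
  have hgeom := (hasSum_geometric_of_lt_one (inv_nonneg.2 (zero_le_one.trans hn.le))
    (inv_lt_one_of_one_lt₀ hn)).mul_left (c / n)
  rw [show c / n * (1 - n⁻¹)⁻¹ = c / (n - 1) by field_simp] at hgeom
  refine hgeom.congr_fun fun k => ?_
  rw [inv_pow, pow_succ]
  field_simp

theorem summable_indicator_of_finite {α E : Type*} [AddCommMonoid E] [TopologicalSpace E]
    {s : Set α} (hs : s.Finite) (f : α → E) : Summable (s.indicator f) :=
  summable_of_hasFiniteSupport (hs.subset (Set.support_indicator_subset))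

theorem tsum_subtype_eq_tsum_indicator {α E : Type*} [AddCommMonoid E] [TopologicalSpace E]
    {p : α → Prop} {s : Set α} {f g : α → E} (hs : {a | p a} = s) (hfg : Set.EqOn f g s) :
    ∑' a : {a // p a}, f a = ∑' a, s.indicator g a := by
  subst hs
  rw [← Set.indicator_congr hfg]
  exact tsum_subtype _ f

theorem tsum_indicator_sub_tsum_indicator {α E : Type*} [AddCommGroup E] [TopologicalSpace E]
    [IsTopologicalAddGroup E] [T2Space E] {s t : Set α} (hs : s.Finite) (hts : t ⊆ s)
    (f : α → E) :
    ∑' a, s.indicator f a - ∑' a, t.indicator f a = ∑' a, (s \ t).indicator f a := by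
  rw [Set.indicator_sdiff hts, ← (summable_indicator_of_finite hs f).tsum_sub
    (summable_indicator_of_finite (hs.subset hts) f)]
  rfl

theorem Ideal.eq_of_not_isCoprime_pow {R : Type*} [CommRing R] {P q : Ideal R}
    (hP : P.IsMaximal) (hq : q.IsMaximal) {k : ℕ} (h : ¬IsCoprime (P ^ k) q) : P = q := by
  by_contra hne
  exact h (Ideal.isCoprime_iff_sup_eq.2 (hP.coprime_of_ne hq hne)).pow_left

theorem Ideal.mem_range_pow_succ_of_not_isCoprime {R : Type*} [CommRing R]
    [Ring.DimensionLEOne R] {q a : Ideal R} (hq : q.IsMaximal)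
    (ha : ∃ (P : Ideal R) (k : ℕ), P.IsPrime ∧ P ≠ ⊥ ∧ 0 < k ∧ a = P ^ k)
    (hcop : ¬IsCoprime a q) : a ∈ Set.range fun k : ℕ => q ^ (k + 1) := by
  obtain ⟨P, k, hP, hP0, hk, rfl⟩ := ha
  obtain rfl := Ideal.eq_of_not_isCoprime_pow (hP.isMaximal hP0) hq hcop
  exact ⟨k - 1, congrArg (P ^ ·) (Nat.sub_add_cancel hk)⟩

/-- On a bounded interval the sum is a finite sum of step functions `t ↦ [N a ≤ t] • w a`. -/
theorem intervalIntegrable_tsum_indicator_setOf_le {α E : Type*} [NormedAddCommGroup E]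
    (N : α → ℝ) (hN : ∀ t, {a | N a ≤ t}.Finite) (s : Set α) (w : α → E) (b₁ b₂ : ℝ) :
    IntervalIntegrable (fun t => ∑' a, (s ∩ {a | N a ≤ t}).indicator w a) volume b₁ b₂ := by
  classical
  set F := (hN (max b₁ b₂)).toFinset
  have hstep : IntervalIntegrable
      (∑ a ∈ F, fun t => (Set.Ici (N a)).indicator (fun _ => s.indicator w a) t) volume b₁ b₂ := by
    refine IntervalIntegrable.sum F fun a _ => ?_
    rw [intervalIntegrable_iff]
    exact (integrableOn_const measure_Ioc_lt_top.ne).indicator measurableSet_Ici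
  refine hstep.congr fun t ht => ?_
  have htM : t ≤ max b₁ b₂ := ht.2.trans (max_le (le_max_left _ _) (le_max_right _ _))
  rw [Finset.sum_apply, tsum_eq_sum (s := F)]
  · refine Finset.sum_congr rfl fun a _ => ?_
    by_cases ha : N a ≤ t <;> simp [Set.indicator, ha]
  · intro a ha
    simp only [F, Set.Finite.mem_toFinset, Set.mem_ofPred_eq] at ha
    exact Set.indicator_of_notMem (fun h => ha (h.2.trans htM)) _

theorem norm_div_sub_mul_integral_le {F : ℝ → ℂ} {a b C : ℝ} (hab : a < b)
    (hF : ∀ t ∈ Set.uIoc a b, ‖F t‖ ≤ C) :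
    ‖1 / ((b : ℂ) - a) * ∫ t in a..b, F t‖ ≤ C := by
  have hba : 0 < b - a := sub_pos.2 hab
  rw [norm_mul, show ((b : ℂ) - a) = ((b - a : ℝ) : ℂ) by push_cast; ring, norm_div, norm_one,
    Complex.norm_real, Real.norm_of_nonneg hba.le, div_mul_eq_mul_div, one_mul, div_le_iff₀ hba]
  simpa [abs_of_pos hba] using intervalIntegral.norm_integral_le_of_norm_le_const hF

section Dedekind

variable {S : Type*} [CommRing S] [IsDedekindDomain S] [Module.Free ℤ S]

theorem Ideal.pow_right_injective_of_one_lt_absNorm {q : Ideal S} (hq : 1 < Ideal.absNorm q) :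
    Function.Injective (q ^ · : ℕ → Ideal S) := fun k j h =>
  Nat.pow_right_injective hq (by simpa only [map_pow] using congrArg Ideal.absNorm h)

theorem Ideal.norm_tsum_le_of_support_subset_range_pow {E : Type*} [SeminormedAddCommGroup E]
    {q : Ideal S} (hq : 1 < Ideal.absNorm q) {f : Ideal S → E} {c : ℝ}
    (hsupp : Function.support f ⊆ Set.range fun k : ℕ => q ^ (k + 1))
    (hf : ∀ k : ℕ, ‖f (q ^ (k + 1))‖ ≤ c / (Ideal.absNorm q : ℝ) ^ (k + 1)) :
    ‖∑' a, f a‖ ≤ c / ((Ideal.absNorm q : ℝ) - 1) := by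
  have hinj : Function.Injective fun k : ℕ => q ^ (k + 1) :=
    (Ideal.pow_right_injective_of_one_lt_absNorm hq).comp (add_left_injective 1)
  rw [← hinj.tsum_eq hsupp]
  exact tsum_of_norm_bounded (hasSum_div_pow_succ c (by exact_mod_cast hq)) hf

variable [Module.Finite ℤ S]

theorem Ideal.one_lt_absNorm_of_ne_bot_of_ne_top {q : Ideal S} (hq0 : q ≠ ⊥) (hq1 : q ≠ ⊤) :
    1 < Ideal.absNorm q := by
  have h0 := mt Ideal.absNorm_eq_zero_iff.1 hq0
  have h1 := mt Ideal.absNorm_eq_one_iff.1 hq1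
  omega

theorem Ideal.norm_tsum_indicator_le_of_not_isCoprime {q : Ideal S} (hq : q.IsPrime)
    (hq0 : q ≠ ⊥) (Λ : Ideal S → ℝ)
    (hΛq : ∀ k : ℕ, |Λ (q ^ (k + 1))| ≤ Real.log (Ideal.absNorm q))
    (hΛ : ∀ a, Λ a ≠ 0 → ∃ (P : Ideal S) (k : ℕ), P.IsPrime ∧ P ≠ ⊥ ∧ 0 < k ∧ a = P ^ k)
    (χ : Ideal S → ℂ) (hχ : ∀ a, ‖χ a‖ ≤ 1) {D : Set (Ideal S)}
    (hD : ∀ a ∈ D, ¬IsCoprime a q) :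
    ‖∑' a, D.indicator (fun a => (Λ a : ℂ) * χ a / (Ideal.absNorm a : ℂ)) a‖ ≤
      Real.log (Ideal.absNorm q) / ((Ideal.absNorm q : ℝ) - 1) := by
  refine Ideal.norm_tsum_le_of_support_subset_range_pow
    (Ideal.one_lt_absNorm_of_ne_bot_of_ne_top hq0 hq.ne_top) (fun a ha => ?_) fun k => ?_
  · obtain ⟨haD, hfa⟩ := Set.support_indicator.subset ha
    have hΛa : Λ a ≠ 0 := fun h => hfa (by simp [h])
    exact Ideal.mem_range_pow_succ_of_not_isCoprime (hq.isMaximal hq0) (hΛ a hΛa) (hD a haD)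
  · refine (norm_indicator_le_norm_self _ _).trans ?_
    rw [norm_div, norm_mul, Complex.norm_real, Real.norm_eq_abs, map_pow, Nat.cast_pow,
      Complex.norm_pow, Complex.norm_natCast]
    gcongr
    exact (mul_le_mul (hΛq k) (hχ _) (norm_nonneg _) (Real.log_natCast_nonneg _)).trans_eq
      (mul_one _)

theorem Ideal.finite_setOf_absNorm_le_real [CharZero S] (t : ℝ) :
    {I : Ideal S | (Ideal.absNorm I : ℝ) ≤ t}.Finite :=
  (Ideal.finite_setOfPred_absNorm_le ⌊t⌋₊).subset fun _ h => Nat.le_floor h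

end Dedekind

/-- Let q be a nonzero prime ideal of a number field K, χ a ray class character
    mod q induced by a character χ* of the class group (so χ(a) = χ*(a) for a
    coprime to q, and |χ*| ≤ 1). Then for x ≥ 2,
    |Φ_{χ*}(x) - Φ_χ(x)| ≤ (x/(x-1))·log N(q)/(N(q)-1), where
    Φ_χ(x) = (1/(x-1))∫_1^x ∑_{N(a)≤t,(a,q)=1} Λ(a)χ(a)/N(a) dt and
    Φ_{χ*}(x) = (1/(x-1))∫_1^x ∑_{N(a)≤t} Λ(a)χ*(a)/N(a) dt. -/
theorem phi_diff_bound (K : Type*) [Field K] [NumberField K]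
    (q : Ideal (𝓞 K)) (hq : q.IsPrime) (hq0 : q ≠ ⊥)
    (Λ : Ideal (𝓞 K) → ℝ)
    (hΛ₁ : ∀ (P : Ideal (𝓞 K)) (k : ℕ), P.IsPrime → P ≠ ⊥ → 0 < k →
      Λ (P ^ k) = Real.log (Ideal.absNorm P))
    (hΛ₂ : ∀ a : Ideal (𝓞 K),
      (¬ ∃ (P : Ideal (𝓞 K)) (k : ℕ), P.IsPrime ∧ P ≠ ⊥ ∧ 0 < k ∧ a = P ^ k) → Λ a = 0)
    (χ χstar : Ideal (𝓞 K) → ℂ)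
    (hind : ∀ a : Ideal (𝓞 K), IsCoprime a q → χ a = χstar a)
    (hbd : ∀ a : Ideal (𝓞 K), ‖χstar a‖ ≤ 1)
    (Φχ Φχstar : ℝ → ℂ)
    (hΦχ : ∀ x : ℝ, Φχ x = (1 / (x - 1)) *
      ∫ t in (1:ℝ)..x,
        ∑' a : {a : Ideal (𝓞 K) // a ≠ ⊥ ∧ (Ideal.absNorm a : ℝ) ≤ t ∧ IsCoprime a q},
          (Λ a : ℂ) * χ a / (Ideal.absNorm (a : Ideal (𝓞 K)) : ℂ))
    (hΦχstar : ∀ x : ℝ, Φχstar x = (1 / (x - 1)) *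
      ∫ t in (1:ℝ)..x,
        ∑' a : {a : Ideal (𝓞 K) // a ≠ ⊥ ∧ (Ideal.absNorm a : ℝ) ≤ t},
          (Λ a : ℂ) * χstar a / (Ideal.absNorm (a : Ideal (𝓞 K)) : ℂ))
    (x : ℝ) (hx : 2 ≤ x) :
    ‖Φχstar x - Φχ x‖ ≤
      (x / (x - 1)) * (Real.log (Ideal.absNorm q) / ((Ideal.absNorm q : ℝ) - 1)) := by
  set f : Ideal (𝓞 K) → ℂ := fun a => (Λ a : ℂ) * χstar a / (Ideal.absNorm a : ℂ)
  set L : ℝ → Set (Ideal (𝓞 K)) := fun t => {a | (Ideal.absNorm a : ℝ) ≤ t}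
  set s₀ : Set (Ideal (𝓞 K)) := {a | a ≠ ⊥}
  set s₁ : Set (Ideal (𝓞 K)) := {a | a ≠ ⊥ ∧ IsCoprime a q}
  have hall (t : ℝ) : ∑' a : {a : Ideal (𝓞 K) // a ≠ ⊥ ∧ (Ideal.absNorm a : ℝ) ≤ t},
      (Λ a : ℂ) * χstar a / (Ideal.absNorm (a : Ideal (𝓞 K)) : ℂ) =
      ∑' a, (s₀ ∩ L t).indicator f a :=
    tsum_subtype_eq_tsum_indicator rfl (Set.eqOn_refl f _)
  have hcop (t : ℝ) :
      ∑' a : {a : Ideal (𝓞 K) // a ≠ ⊥ ∧ (Ideal.absNorm a : ℝ) ≤ t ∧ IsCoprime a q},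
        (Λ a : ℂ) * χ a / (Ideal.absNorm (a : Ideal (𝓞 K)) : ℂ) =
      ∑' a, (s₁ ∩ L t).indicator f a := by
    refine tsum_subtype_eq_tsum_indicator (f := fun a => (Λ a : ℂ) * χ a / (Ideal.absNorm a : ℂ))
      ?_ fun a ha => ?_
    · ext
      simp only [s₁, L, Set.mem_inter_iff, Set.mem_ofPred_eq]
      tauto
    · simp only [f, hind a ha.1.2]
  have hdiff (t : ℝ) : ‖∑' a, (s₀ ∩ L t).indicator f a - ∑' a, (s₁ ∩ L t).indicator f a‖ ≤
      Real.log (Ideal.absNorm q) / ((Ideal.absNorm q : ℝ) - 1) := by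
    rw [tsum_indicator_sub_tsum_indicator ((Ideal.finite_setOf_absNorm_le_real t).inter_of_right _)
      (Set.inter_subset_inter_left _ fun a h => h.1)]
    refine Ideal.norm_tsum_indicator_le_of_not_isCoprime hq hq0 Λ (fun k => ?_)
      (fun a ha => by_contra fun h => ha (hΛ₂ a h)) χstar hbd fun a ha hnc => ?_
    · rw [hΛ₁ q (k + 1) hq hq0 k.succ_pos, abs_of_nonneg (Real.log_natCast_nonneg _)]
    · exact ha.2 ⟨⟨ha.1.1, hnc⟩, ha.1.2⟩
  rw [hΦχstar, hΦχ, ← mul_sub]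
  simp only [hall, hcop]
  rw [← intervalIntegral.integral_sub
    (intervalIntegrable_tsum_indicator_setOf_le _ Ideal.finite_setOf_absNorm_le_real _ _ _ _)
    (intervalIntegrable_tsum_indicator_setOf_le _ Ideal.finite_setOf_absNorm_le_real _ _ _ _)]
  calc _ ≤ Real.log (Ideal.absNorm q) / ((Ideal.absNorm q : ℝ) - 1) := by
        simpa only [Complex.ofReal_one] using
          norm_div_sub_mul_integral_le (a := 1) (b := x) (by linarith) fun t _ => hdiff t
    _ ≤ _ := le_mul_of_one_le_left ((norm_nonneg _).trans (hdiff 1))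
        ((one_le_div (by linarith)).2 (by linarith))
end
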